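/- (Distortion with respect to p.) Let (F_p)_{p∈P} be a family of C^r-skew-products satisfying assumption (U). For every η > 0 there exist δ(η) > 0 and D₂ = D₂(η) > 1 such that for all p₁, p₂ in the closure of P with ‖p₁ − p₂‖ ≤ δ(η) and every 𝔞 ∈ 𝒜^ℕ, one has for every finite word α ∈ 𝒜^*: D₂⁻¹·e^{−η|α|} < Λ_{p₁,𝔞,α}/Λ_{p₂,𝔞,α} < D₂·e^{η|α|}. -/

import Mathlib

open Filter MeasureTheory Set
open scoped Topology ENNReal NNReal

noncomputable section

namespace Paper

abbrev E (n : ℕ) : Type := EuclideanSpace ℝ (Fin n)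

def cube (N : ℕ) : Set (E N) := {x | ∀ i, x i ∈ Icc (-1:ℝ) 1}

def cubeO (d : ℕ) : Set (E d) := {p | ∀ i, p i ∈ Ioo (-1:ℝ) 1}

variable {A : Type}

def consF (a : A) (𝔞 : ℕ → A) : ℕ → A := fun n =>
  match n with
  | 0 => a
  | Nat.succ k => 𝔞 k

def app : List A → (ℕ → A) → ℕ → A
  | [], 𝔞 => 𝔞
  | a :: w, 𝔞 => app w (consF a 𝔞)

def trunc (α : ℕ → A) (n : ℕ) : List A := List.ofFn fun i : Fin n => α i

def cyl (w : List A) : Set (ℕ → A) := {α | ∀ i : Fin w.length, α i = w.get i}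

variable {N d : ℕ}

def psi (f : E d → (ℕ → A) → E N → E N) (p : E d) : List A → (ℕ → A) → E N → E N
  | [], _ => id
  | a :: w, 𝔞 => f p (consF a 𝔞) ∘ psi f p w (consF a 𝔞)

def dentry (g : E N → E N) (x : E N) (i j : Fin N) : ℝ :=
  fderiv ℝ g x (EuclideanSpace.single j (1:ℝ)) i

def lam (hN : 0 < N) (f : E d → (ℕ → A) → E N → E N) (p : E d) (𝔞 : ℕ → A)
    (w : List A) (x : E N) : ℝ :=
  |dentry (psi f p w 𝔞) x ⟨0, hN⟩ ⟨0, hN⟩|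

def Lam (hN : 0 < N) (f : E d → (ℕ → A) → E N → E N) (p : E d) (𝔞 : ℕ → A)
    (w : List A) : ℝ :=
  sSup ((fun x => lam hN f p 𝔞 w x) '' cube N)

def piProj (f : E d → (ℕ → A) → E N → E N) (p : E d) (𝔞 α : ℕ → A) : E N :=
  limUnder atTop fun n => psi f p (trunc α n) 𝔞 0

def Mop (g : E N → E N) : ℝ := sSup ((fun x => ‖fderiv ℝ g x‖) '' cube N)

def pressure [Fintype A] (f : E d → (ℕ → A) → E N → E N) (p : E d) (𝔞 : ℕ → A) (s : ℝ) : ℝ :=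
  limUnder atTop fun n : ℕ =>
    (1 / n : ℝ) * Real.log (∑ w : Fin n → A, Mop (psi f p (List.ofFn w) 𝔞) ^ s)

structure SkewFamily (A : Type) (N d : ℕ) (r : ℕ∞) where
  f : E d → (ℕ → A) → E N → E N
  X' : Set (E N)
  P' : Set (E d)
  X'_open : IsOpen X'
  X_subset : cube N ⊆ X'
  P'_open : IsOpen P'
  P_subset : closure (cubeO d) ⊆ P'
  smooth : ∀ 𝔞 : ℕ → A, ContDiffOn ℝ r (fun q : E d × E N => f q.1 𝔞 q.2) (P' ×ˢ X')
  inj : ∀ 𝔞 : ℕ → A, ∀ p ∈ P', Set.InjOn (f p 𝔞) X'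
  into : ∀ 𝔞 : ℕ → A, ∀ p ∈ P', f p 𝔞 '' X' ⊆ cube N
  holder0 : ∃ C > (0:ℝ), ∃ θ ∈ Set.Ioo (0:ℝ) 1, ∀ p ∈ P', ∀ (𝔞 𝔟 : ℕ → A) (q : ℕ),
      (∀ i < q, 𝔞 i = 𝔟 i) → ∀ x ∈ X', ‖f p 𝔞 x - f p 𝔟 x‖ ≤ C * θ ^ q
  holder1 : ∃ C > (0:ℝ), ∃ θ ∈ Set.Ioo (0:ℝ) 1, ∀ p ∈ P', ∀ (𝔞 𝔟 : ℕ → A) (q : ℕ),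
      (∀ i < q, 𝔞 i = 𝔟 i) → ∀ x ∈ X',
      ‖fderiv ℝ (f p 𝔞) x - fderiv ℝ (f p 𝔟) x‖ ≤ C * θ ^ q
  cont2 : ∀ p ∈ P', ∀ 𝔞 : ℕ → A, ∀ ε > (0:ℝ), ∃ q : ℕ, ∀ 𝔟 : ℕ → A,
      (∀ i < q, 𝔞 i = 𝔟 i) → ∀ x ∈ X',
      ‖iteratedFDeriv ℝ 2 (f p 𝔞) x - iteratedFDeriv ℝ 2 (f p 𝔟) x‖ ≤ ε

def UnipOn (hN : 0 < N) (f : E d → (ℕ → A) → E N → E N)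
    (P' : Set (E d)) (X' : Set (E N)) : Prop :=
  ∀ p ∈ P', ∀ 𝔞 : ℕ → A, ∀ x ∈ X',
    (∀ i j : Fin N, (i : ℕ) < (j : ℕ) → dentry (f p 𝔞) x i j = 0) ∧
    (∀ i j : Fin N, dentry (f p 𝔞) x i i = dentry (f p 𝔞) x j j) ∧
    0 < |dentry (f p 𝔞) x ⟨0, hN⟩ ⟨0, hN⟩| ∧ |dentry (f p 𝔞) x ⟨0, hN⟩ ⟨0, hN⟩| < 1

def GammaBounds (hN : 0 < N) (f : E d → (ℕ → A) → E N → E N) (γ' γ : ℝ) : Prop :=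
  0 < γ' ∧ γ' < γ ∧ γ < 1 ∧
  ∀ p ∈ closure (cubeO d), ∀ (𝔞 : ℕ → A) (a : A), ∀ x ∈ cube N,
    γ' < lam hN f p 𝔞 [a] x ∧ lam hN f p 𝔞 [a] x < γ

structure ParamPerturb {A : Type} {N d : ℕ} {r : ℕ∞} (hN : 0 < N)
    (S : SkewFamily A N d r) (θ : ℝ) (τ : ℕ) where
  g : E τ → E d → (ℕ → A) → E N → E N
  jointSmooth : ∀ 𝔞 : ℕ → A, ContDiffOn ℝ r
      (fun q : E τ × E d × E N => g q.1 q.2.1 𝔞 q.2.2) ((cubeO τ) ×ˢ S.P' ×ˢ S.X')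
  smooth : ∀ t ∈ cubeO τ, ∀ 𝔞 : ℕ → A, ContDiffOn ℝ r
      (fun q : E d × E N => g t q.1 𝔞 q.2) (S.P' ×ˢ S.X')
  inj : ∀ t ∈ cubeO τ, ∀ 𝔞 : ℕ → A, ∀ p ∈ S.P', Set.InjOn (g t p 𝔞) S.X'
  into : ∀ t ∈ cubeO τ, ∀ 𝔞 : ℕ → A, ∀ p ∈ S.P', g t p 𝔞 '' S.X' ⊆ cube N
  close : ∃ θ' < θ, ∀ t ∈ cubeO τ, ∀ (𝔞 : ℕ → A) (k : ℕ), (k : ℕ∞) ≤ r →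
      ∀ p ∈ S.P', ∀ x ∈ S.X',
      ‖iteratedFDeriv ℝ k (fun q : E d × E N => S.f q.1 𝔞 q.2 - g t q.1 𝔞 q.2) (p, x)‖ ≤ θ'
  unip : ∀ t ∈ cubeO τ, UnipOn hN (g t) S.P' S.X'

def TransAssumption {A : Type} {N d : ℕ} {r : ℕ∞} (hN : 0 < N)
    (S : SkewFamily A N d r) : Prop :=
  ∃ C > (0:ℝ),
    (∀ 𝔞 α β : ℕ → A, α 0 ≠ β 0 → ∀ rr > (0:ℝ),
      volume {p ∈ cubeO d | ‖piProj S.f p 𝔞 α - piProj S.f p 𝔞 β‖ < rr}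
        ≤ ENNReal.ofReal (C * rr ^ N)) ∧
    ∃ θ₀ > (0:ℝ), ∀ θ : ℝ, 0 < θ → θ ≤ θ₀ → ∀ τ : ℕ, 0 < τ →
      ∀ Ft : ParamPerturb hN S θ τ, ∀ t ∈ cubeO τ,
      ∀ 𝔞 α β : ℕ → A, α 0 ≠ β 0 → ∀ rr > (0:ℝ),
        volume {p ∈ cubeO d | ‖piProj (Ft.g t) p 𝔞 α - piProj (Ft.g t) p 𝔞 β‖ < rr}
          ≤ ENNReal.ofReal (C * rr ^ N)

def dens {N : ℕ} (ν : Measure (E N)) (x : E N) : ℝ≥0∞ :=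
  liminf (fun rr : ℝ => ν (Metric.ball x rr) / volume (Metric.ball (0 : E N) rr)) (𝓝[>] (0:ℝ))

end Paper

namespace IFS

open Paper

variable {A : Type}

def psiA (c b : ℝ → A → ℝ) (p : ℝ) : List A → ℝ → ℝ
  | [], x => x
  | a :: w, x => c p a * psiA c b p w x + b p a

def piA (c b : ℝ → A → ℝ) (p : ℝ) (α : ℕ → A) : ℝ :=
  limUnder atTop fun n => psiA c b p (Paper.trunc α n) 0

def LamA (c : ℝ → A → ℝ) (p : ℝ) (w : List A) : ℝ := (w.map fun a => |c p a|).prod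

def IFSHyp (c b : ℝ → A → ℝ) (U : Set ℝ) : Prop :=
  IsOpen U ∧ Icc (-1:ℝ) 1 ⊆ U ∧
  (∀ a : A, ContinuousOn (fun p => c p a) U) ∧
  (∀ a : A, ContinuousOn (fun p => b p a) U) ∧
  (∀ p ∈ U, ∀ a : A, ∀ x ∈ Icc (-1:ℝ) 1, c p a * x + b p a ∈ Ioo (-1:ℝ) 1)

def GammaBoundsA (c : ℝ → A → ℝ) (γ' γ : ℝ) : Prop :=
  0 < γ' ∧ γ' < γ ∧ γ < 1 ∧ ∀ p ∈ Icc (-1:ℝ) 1, ∀ a : A, γ' < |c p a| ∧ |c p a| < γ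

def TransAff (c b : ℝ → A → ℝ) : Prop :=
  ∃ C > (0:ℝ), ∀ α β : ℕ → A, α 0 ≠ β 0 → ∀ rr > (0:ℝ),
    volume {p ∈ Ioo (-1:ℝ) 1 | |piA c b p α - piA c b p β| < rr} ≤ ENNReal.ofReal (C * rr)

def densR (ν : MeasureTheory.Measure ℝ) (x : ℝ) : ℝ≥0∞ :=
  liminf (fun rr : ℝ => ν (Ioo (x - rr) (x + rr)) / ENNReal.ofReal (2 * rr)) (𝓝[>] (0:ℝ))

end IFS

namespace Paper

namespace Gfsk

lemma zero_mem_cube (N : ℕ) : (0 : E N) ∈ cube N := by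
  intro i; simp [cube]

lemma cube_convex (N : ℕ) : Convex ℝ (cube N) := by
  intro x hx y hy a b ha hb hab i
  have := (convex_Icc (-1:ℝ) 1) (hx i) (hy i) ha hb hab
  simpa [PiLp.add_apply, PiLp.smul_apply, smul_eq_mul] using this

lemma isClosed_cube (N : ℕ) : IsClosed (cube N) := by
  have : cube N = ⋂ i, (fun x : E N => x i) ⁻¹' Icc (-1:ℝ) 1 := by
    ext x; simp [cube]
  rw [this]
  exact isClosed_iInter fun i => IsClosed.preimage (EuclideanSpace.proj (𝕜 := ℝ) i).continuous isClosed_Icc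

lemma abs_coord_le_norm {N : ℕ} (u : E N) (i : Fin N) : |u i| ≤ ‖u‖ := by
  rw [EuclideanSpace.norm_eq]
  rw [show |u i| = Real.sqrt ((u i)^2) from (Real.sqrt_sq_eq_abs _).symm]
  apply Real.sqrt_le_sqrt
  have h : (u i)^2 ≤ ∑ j, (u j)^2 :=
    Finset.single_le_sum (f := fun j => (u j)^2) (fun j _ => sq_nonneg _) (Finset.mem_univ i)
  simpa using h

lemma norm_le_sum_abs {N : ℕ} (u : E N) : ‖u‖ ≤ ∑ i, |u i| := by
  rw [EuclideanSpace.norm_eq]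
  have h1 : ∑ i, ‖u i‖^2 ≤ (∑ i, |u i|)^2 := by
    have := Finset.sum_sq_le_sq_sum_of_nonneg (s := Finset.univ) (f := fun i : Fin N => |u i|)
      (fun i _ => abs_nonneg _)
    simpa using this
  calc Real.sqrt (∑ i, ‖u i‖^2) ≤ Real.sqrt ((∑ i, |u i|)^2) := Real.sqrt_le_sqrt h1
    _ = abs (∑ i, |u i|) := Real.sqrt_sq_eq_abs _
    _ = ∑ i, |u i| := abs_of_nonneg (Finset.sum_nonneg fun i _ => abs_nonneg _)

lemma isCompact_cube (N : ℕ) : IsCompact (cube N) := by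
  apply Metric.isCompact_of_isClosed_isBounded (isClosed_cube N)
  rw [Metric.isBounded_iff_subset_closedBall 0]
  refine ⟨N, fun x hx => ?_⟩
  simp only [Metric.mem_closedBall, dist_zero_right]
  calc ‖x‖ ≤ ∑ i, |x i| := norm_le_sum_abs x
    _ ≤ ∑ _i : Fin N, 1 := Finset.sum_le_sum fun i _ => abs_le.2 ⟨(hx i).1, (hx i).2⟩
    _ = N := by simp

lemma closure_cubeO_subset (d : ℕ) : closure (cubeO d) ⊆ cube d := by
  apply closure_minimal _ (isClosed_cube d)
  intro x hx i
  exact Ioo_subset_Icc_self (hx i)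

lemma isCompact_closure_cubeO (d : ℕ) : IsCompact (closure (cubeO d)) :=
  (isCompact_cube d).of_isClosed_subset isClosed_closure (closure_cubeO_subset d)

lemma euclid_decomp {N : ℕ} (v : E N) : v = ∑ j, v j • EuclideanSpace.single j (1:ℝ) := by
  have h := (EuclideanSpace.basisFun (Fin N) ℝ).sum_repr v
  simp only [EuclideanSpace.basisFun_repr, EuclideanSpace.basisFun_apply] at h
  exact h.symm

lemma euclid_apply {N : ℕ} (T : E N →L[ℝ] E N) (v : E N) (i : Fin N) :
    T v i = ∑ j, v j * T (EuclideanSpace.single j (1:ℝ)) i := by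
  conv_lhs => rw [euclid_decomp v]
  rw [map_sum]
  have h2 : (∑ x : Fin N, T (v x • EuclideanSpace.single x 1)) i
      = EuclideanSpace.proj (𝕜 := ℝ) i (∑ x : Fin N, T (v x • EuclideanSpace.single x 1)) := rfl
  rw [h2, map_sum]
  refine Finset.sum_congr rfl fun j _ => ?_
  rw [_root_.map_smul]
  simp [PiLp.proj_apply, smul_eq_mul]

end Gfsk

namespace Gfsk2
variable {A : Type} {N d : ℕ} {r : ℕ∞}
open Gfsk

/-- The joint map. -/
def F (S : SkewFamily A N d r) (𝔟 : ℕ → A) : E d × E N → E N := fun q => S.f q.1 𝔟 q.2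

def ell (hN : 0 < N) (f : E d → (ℕ → A) → E N → E N) (p : E d) (𝔟 : ℕ → A) (x : E N) : ℝ :=
  |dentry (f p 𝔟) x ⟨0,hN⟩ ⟨0,hN⟩|

lemma one_le_r {r : ℕ∞} (hr : 2 ≤ r) : (1 : WithTop ℕ∞) ≤ (r : WithTop ℕ∞) := by
  have h1 : (1:ℕ∞) ≤ r := le_trans (by norm_num) hr
  exact_mod_cast h1

lemma prod_open (S : SkewFamily A N d r) : IsOpen (S.P' ×ˢ S.X') :=
  S.P'_open.prod S.X'_open

lemma diffF (S : SkewFamily A N d r) (hr : 2 ≤ r) (𝔟 : ℕ → A) {p : E d} {x : E N}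
    (hp : p ∈ S.P') (hx : x ∈ S.X') : DifferentiableAt ℝ (F S 𝔟) (p, x) := by
  have h := (S.smooth 𝔟).contDiffAt ((prod_open S).mem_nhds (Set.mk_mem_prod hp hx))
  exact h.differentiableAt (lt_of_lt_of_le zero_lt_one (one_le_r hr)).ne'

lemma hasFDerivAt_partial (S : SkewFamily A N d r) (hr : 2 ≤ r) (𝔟 : ℕ → A) {p : E d} {x : E N}
    (hp : p ∈ S.P') (hx : x ∈ S.X') :
    HasFDerivAt (S.f p 𝔟)
      ((fderiv ℝ (F S 𝔟) (p, x)).comp (ContinuousLinearMap.inr ℝ (E d) (E N))) x := by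
  have h1 : HasFDerivAt (F S 𝔟) (fderiv ℝ (F S 𝔟) (p, x)) (p, x) :=
    (diffF S hr 𝔟 hp hx).hasFDerivAt
  have h2 : HasFDerivAt (fun y : E N => (p, y)) (ContinuousLinearMap.inr ℝ (E d) (E N)) x :=
    hasFDerivAt_prodMk_right p x
  exact h1.comp x h2

lemma diff_f (S : SkewFamily A N d r) (hr : 2 ≤ r) (𝔟 : ℕ → A) {p : E d} {x : E N}
    (hp : p ∈ S.P') (hx : x ∈ S.X') : DifferentiableAt ℝ (S.f p 𝔟) x :=
  (hasFDerivAt_partial S hr 𝔟 hp hx).differentiableAt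

lemma dentry_eq (S : SkewFamily A N d r) (hr : 2 ≤ r) (𝔟 : ℕ → A) {p : E d} {x : E N}
    (hp : p ∈ S.P') (hx : x ∈ S.X') (i j : Fin N) :
    dentry (S.f p 𝔟) x i j
      = fderiv ℝ (F S 𝔟) (p, x) (0, EuclideanSpace.single j (1:ℝ)) i := by
  rw [dentry, (hasFDerivAt_partial S hr 𝔟 hp hx).fderiv]
  rfl

lemma contOn_dentry (S : SkewFamily A N d r) (hr : 2 ≤ r) (𝔟 : ℕ → A) (i j : Fin N) :
    ContinuousOn (fun q : E d × E N => dentry (S.f q.1 𝔟) q.2 i j) (S.P' ×ˢ S.X') := by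
  have h1 : ContinuousOn (fderiv ℝ (F S 𝔟)) (S.P' ×ˢ S.X') :=
    (S.smooth 𝔟).continuousOn_fderiv_of_isOpen (prod_open S) (one_le_r hr)
  have h2 : ContinuousOn
      (fun q : E d × E N => fderiv ℝ (F S 𝔟) q (0, EuclideanSpace.single j (1:ℝ)) i)
      (S.P' ×ˢ S.X') := by
    have hc : Continuous fun T : (E d × E N) →L[ℝ] E N =>
        T (0, EuclideanSpace.single j (1:ℝ)) :=
      (ContinuousLinearMap.apply ℝ (E N) ((0 : E d), EuclideanSpace.single j (1:ℝ))).continuous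
    have : Continuous fun T : (E d × E N) →L[ℝ] E N =>
        T (0, EuclideanSpace.single j (1:ℝ)) i := (EuclideanSpace.proj (𝕜 := ℝ) i).continuous.comp hc
    exact this.comp_continuousOn h1
  refine h2.congr fun q hq => ?_
  exact dentry_eq S hr 𝔟 hq.1 hq.2 i j
end Gfsk2


namespace Gfsk3
variable {A : Type} {N d : ℕ} {r : ℕ∞}
open Gfsk Gfsk2

lemma psi_nil (f : E d → (ℕ → A) → E N → E N) (p : E d) (𝔞 : ℕ → A) :
    psi f p [] 𝔞 = id := rfl

lemma psi_cons (f : E d → (ℕ → A) → E N → E N) (p : E d) (a : A) (w : List A) (𝔞 : ℕ → A) :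
    psi f p (a :: w) 𝔞 = f p (consF a 𝔞) ∘ psi f p w (consF a 𝔞) := rfl

lemma consF_self (𝔟 : ℕ → A) : consF (𝔟 0) (fun k => 𝔟 (k+1)) = 𝔟 := by
  funext n; cases n <;> rfl

lemma psi_mem_X' (S : SkewFamily A N d r) {p : E d} (hp : p ∈ S.P')
    (w : List A) (𝔞 : ℕ → A) {x : E N} (hx : x ∈ S.X') : psi S.f p w 𝔞 x ∈ S.X' := by
  induction w generalizing 𝔞 with
  | nil => exact hx
  | cons a w ih =>
      rw [psi_cons]
      exact S.X_subset (S.into (consF a 𝔞) p hp (mem_image_of_mem _ (ih (consF a 𝔞))))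

lemma psi_mem_cube (S : SkewFamily A N d r) {p : E d} (hp : p ∈ S.P')
    (w : List A) (𝔞 : ℕ → A) {x : E N} (hx : x ∈ cube N) : psi S.f p w 𝔞 x ∈ cube N := by
  cases w with
  | nil => exact hx
  | cons a w =>
      rw [psi_cons]
      exact S.into (consF a 𝔞) p hp
        (mem_image_of_mem _ (psi_mem_X' S hp w (consF a 𝔞) (S.X_subset hx)))

lemma psi_diff (S : SkewFamily A N d r) (hr : 2 ≤ r) {p : E d} (hp : p ∈ S.P')
    (w : List A) (𝔞 : ℕ → A) {x : E N} (hx : x ∈ S.X') :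
    DifferentiableAt ℝ (psi S.f p w 𝔞) x := by
  induction w generalizing 𝔞 with
  | nil => exact differentiableAt_id
  | cons a w ih =>
      rw [psi_cons]
      exact (diff_f S hr (consF a 𝔞) hp (psi_mem_X' S hp w (consF a 𝔞) hx)).comp x
        (ih (consF a 𝔞))

lemma ell_nonneg (hN : 0 < N) (f : E d → (ℕ → A) → E N → E N) (p : E d) (𝔟 : ℕ → A)
    (x : E N) : 0 ≤ ell hN f p 𝔟 x := abs_nonneg _

lemma lam_eq_ell (hN : 0 < N) (f : E d → (ℕ → A) → E N → E N) (p : E d) (𝔟 : ℕ → A)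
    (x : E N) : lam hN f p (fun k => 𝔟 (k+1)) [𝔟 0] x = ell hN f p 𝔟 x := by
  rw [lam, ell]
  congr 2
  rw [psi_cons, psi_nil, Function.comp_id, consF_self]

lemma ell_bounds (hN : 0 < N) {f : E d → (ℕ → A) → E N → E N} {γ' γ : ℝ}
    (hγ : GammaBounds hN f γ' γ) {p : E d} (hp : p ∈ closure (cubeO d)) (𝔟 : ℕ → A)
    {x : E N} (hx : x ∈ cube N) : γ' < ell hN f p 𝔟 x ∧ ell hN f p 𝔟 x < γ := by
  have h := hγ.2.2.2 p hp (fun k => 𝔟 (k+1)) (𝔟 0) x hx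
  rwa [lam_eq_ell] at h

lemma lam_cons (S : SkewFamily A N d r) (hr : 2 ≤ r) (hN : 0 < N)
    (hU : UnipOn hN S.f S.P' S.X') {p : E d} (hp : p ∈ S.P') (a : A) (w : List A)
    (𝔞 : ℕ → A) {x : E N} (hx : x ∈ S.X') :
    lam hN S.f p 𝔞 (a :: w) x
      = ell hN S.f p (consF a 𝔞) (psi S.f p w (consF a 𝔞) x)
        * lam hN S.f p (consF a 𝔞) w x := by
  set 𝔟 := consF a 𝔞
  set h := psi S.f p w 𝔟 with hh
  set y := h x with hy
  have hyX : y ∈ S.X' := psi_mem_X' S hp w 𝔟 hx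
  have hdf : DifferentiableAt ℝ (S.f p 𝔟) y := diff_f S hr 𝔟 hp hyX
  have hdh : DifferentiableAt ℝ h x := psi_diff S hr hp w 𝔟 hx
  have hcomp : fderiv ℝ (S.f p 𝔟 ∘ h) x = (fderiv ℝ (S.f p 𝔟) y).comp (fderiv ℝ h x) :=
    fderiv_comp x hdf hdh
  have key : dentry (psi S.f p (a :: w) 𝔞) x ⟨0,hN⟩ ⟨0,hN⟩
      = dentry (S.f p 𝔟) y ⟨0,hN⟩ ⟨0,hN⟩ * dentry h x ⟨0,hN⟩ ⟨0,hN⟩ := by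
    rw [psi_cons]
    rw [dentry, hcomp]
    have happ : ((fderiv ℝ (S.f p 𝔟) y).comp (fderiv ℝ h x))
        (EuclideanSpace.single ⟨0,hN⟩ (1:ℝ)) ⟨0,hN⟩
        = (fderiv ℝ (S.f p 𝔟) y) ((fderiv ℝ h x) (EuclideanSpace.single ⟨0,hN⟩ (1:ℝ)))
          ⟨0,hN⟩ := rfl
    rw [happ, euclid_apply]
    rw [Finset.sum_eq_single (⟨0,hN⟩ : Fin N)]
    · simp only [dentry]; ring
    · intro j _ hj
      have hlt : ((⟨0,hN⟩ : Fin N) : ℕ) < (j : ℕ) := by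
        have h1 : (j : ℕ) ≠ 0 := fun h0 => hj (Fin.ext h0)
        have h2 : ((⟨0,hN⟩ : Fin N) : ℕ) = 0 := rfl
        omega
      have hz := (hU p hp 𝔟 y hyX).1 ⟨0,hN⟩ j hlt
      simp only [dentry] at hz
      rw [hz]
      ring
    · intro h0; exact absurd (Finset.mem_univ _) h0
  rw [lam, key, abs_mul, lam, ell]

lemma lam_nil (hN : 0 < N) (f : E d → (ℕ → A) → E N → E N) (p : E d) (𝔞 : ℕ → A)
    (x : E N) : lam hN f p 𝔞 [] x = 1 := by
  rw [lam, psi_nil, dentry]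
  rw [fderiv_id]
  simp [EuclideanSpace.single_apply]

lemma lam_bounds (S : SkewFamily A N d r) (hr : 2 ≤ r) (hN : 0 < N)
    (hU : UnipOn hN S.f S.P' S.X') {γ' γ : ℝ} (hγ : GammaBounds hN S.f γ' γ)
    {p : E d} (hp : p ∈ closure (cubeO d)) (w : List A) (𝔞 : ℕ → A)
    {x : E N} (hx : x ∈ cube N) :
    γ' ^ w.length ≤ lam hN S.f p 𝔞 w x ∧ lam hN S.f p 𝔞 w x ≤ γ ^ w.length := by
  have hpP : p ∈ S.P' := S.P_subset hp
  have hγ'0 : 0 < γ' := hγ.1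
  induction w generalizing 𝔞 with
  | nil => rw [lam_nil]; norm_num
  | cons a w ih =>
      rw [lam_cons S hr hN hU hpP a w 𝔞 (S.X_subset hx)]
      obtain ⟨ih1, ih2⟩ := ih (consF a 𝔞)
      have hyc : psi S.f p w (consF a 𝔞) x ∈ cube N := psi_mem_cube S hpP w (consF a 𝔞) hx
      obtain ⟨he1, he2⟩ := ell_bounds hN hγ hp (consF a 𝔞) hyc
      constructor
      · have : γ' ^ (a :: w).length = γ' * γ' ^ w.length := by
          simp [List.length_cons, pow_succ]; ring
        rw [this]
        exact mul_le_mul he1.le ih1 (pow_nonneg hγ'0.le _) (le_trans hγ'0.le he1.le)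
      · have : γ ^ (a :: w).length = γ * γ ^ w.length := by
          simp [List.length_cons, pow_succ]; ring
        rw [this]
        exact mul_le_mul he2.le ih2
          (le_trans (pow_nonneg hγ'0.le _) ih1) (le_trans hγ'0.le (le_trans he1.le he2.le))
      
end Gfsk3


namespace Gfsk4
variable {A : Type} {N d : ℕ} {r : ℕ∞}
open Gfsk Gfsk2 Gfsk3

def Kc (N d : ℕ) : Set (E d × E N) := closure (cubeO d) ×ˢ cube N

lemma isCompact_Kc : IsCompact (Kc N d) :=
  (isCompact_closure_cubeO d).prod (isCompact_cube N)

lemma Kc_subset (S : SkewFamily A N d r) : Kc N d ⊆ S.P' ×ˢ S.X' :=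
  Set.prod_mono S.P_subset S.X_subset

lemma abs_entry_le_opNorm (T : E N →L[ℝ] E N) (i j : Fin N) :
    |T (EuclideanSpace.single j (1:ℝ)) i| ≤ ‖T‖ := by
  calc |T (EuclideanSpace.single j (1:ℝ)) i| ≤ ‖T (EuclideanSpace.single j (1:ℝ))‖ :=
        abs_coord_le_norm _ i
    _ ≤ ‖T‖ * ‖EuclideanSpace.single j (1:ℝ)‖ := T.le_opNorm _
    _ = ‖T‖ := by rw [EuclideanSpace.norm_single, norm_one, mul_one]

lemma ell_sub_le (hN : 0 < N) (f : E d → (ℕ → A) → E N → E N) (p : E d) (𝔞 𝔟 : ℕ → A)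
    (x : E N) :
    |ell hN f p 𝔞 x - ell hN f p 𝔟 x| ≤ ‖fderiv ℝ (f p 𝔞) x - fderiv ℝ (f p 𝔟) x‖ := by
  have h1 : |ell hN f p 𝔞 x - ell hN f p 𝔟 x|
      ≤ |dentry (f p 𝔞) x ⟨0,hN⟩ ⟨0,hN⟩ - dentry (f p 𝔟) x ⟨0,hN⟩ ⟨0,hN⟩| :=
    abs_abs_sub_abs_le_abs_sub _ _
  refine h1.trans ?_
  have h2 : dentry (f p 𝔞) x ⟨0,hN⟩ ⟨0,hN⟩ - dentry (f p 𝔟) x ⟨0,hN⟩ ⟨0,hN⟩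
      = (fderiv ℝ (f p 𝔞) x - fderiv ℝ (f p 𝔟) x)
          (EuclideanSpace.single ⟨0,hN⟩ (1:ℝ)) ⟨0,hN⟩ := by
    simp [dentry, ContinuousLinearMap.sub_apply, PiLp.sub_apply]
  rw [h2]
  exact abs_entry_le_opNorm _ _ _

/-- Uniform bound on all matrix entries. -/
lemma exists_B (S : SkewFamily A N d r) (hr : 2 ≤ r) (a₀ : A) :
    ∃ B ≥ (1:ℝ), ∀ (𝔟 : ℕ → A), ∀ p ∈ closure (cubeO d), ∀ x ∈ cube N, ∀ i j : Fin N,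
      |dentry (S.f p 𝔟) x i j| ≤ B := by
  classical
  set 𝔟₀ : ℕ → A := fun _ => a₀
  have hcont : ContinuousOn (fun q : E d × E N => fderiv ℝ (F S 𝔟₀) q) (Kc N d) :=
    ((S.smooth 𝔟₀).continuousOn_fderiv_of_isOpen (prod_open S) (one_le_r hr)).mono
      (Kc_subset S)
  obtain ⟨C0, hC0⟩ := isCompact_Kc.exists_bound_of_continuousOn hcont
  obtain ⟨C1, hC1pos, θ, hθ, hold⟩ := S.holder1
  refine ⟨max 1 (C0 + C1), le_max_left _ _, ?_⟩
  intro 𝔟 p hp x hx i j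
  have hpP : p ∈ S.P' := S.P_subset hp
  have hxX : x ∈ S.X' := S.X_subset hx
  have hd0 : |dentry (S.f p 𝔟₀) x i j| ≤ C0 := by
    rw [dentry_eq S hr 𝔟₀ hpP hxX]
    calc |fderiv ℝ (F S 𝔟₀) (p,x) (0, EuclideanSpace.single j (1:ℝ)) i|
        ≤ ‖fderiv ℝ (F S 𝔟₀) (p,x) (0, EuclideanSpace.single j (1:ℝ))‖ :=
          abs_coord_le_norm _ i
      _ ≤ ‖fderiv ℝ (F S 𝔟₀) (p,x)‖ * ‖((0 : E d), EuclideanSpace.single j (1:ℝ))‖ :=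
          (fderiv ℝ (F S 𝔟₀) (p,x)).le_opNorm _
      _ ≤ C0 * 1 := by
          refine mul_le_mul (hC0 (p,x) (Set.mk_mem_prod hp hx)) ?_ (norm_nonneg _)
            (le_trans (norm_nonneg _) (hC0 (p,x) (Set.mk_mem_prod hp hx)))
          rw [Prod.norm_def]
          rw [norm_zero, EuclideanSpace.norm_single, norm_one]
          norm_num
      _ = C0 := mul_one _
  have hdiff : |dentry (S.f p 𝔟) x i j - dentry (S.f p 𝔟₀) x i j| ≤ C1 := by
    have h2 : dentry (S.f p 𝔟) x i j - dentry (S.f p 𝔟₀) x i j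
        = (fderiv ℝ (S.f p 𝔟) x - fderiv ℝ (S.f p 𝔟₀) x)
            (EuclideanSpace.single j (1:ℝ)) i := by
      simp [dentry, ContinuousLinearMap.sub_apply, PiLp.sub_apply]
    rw [h2]
    refine (abs_entry_le_opNorm _ _ _).trans ?_
    have h4 := hold p hpP 𝔟 𝔟₀ 0 (by intro k hk; omega) x hxX
    rwa [pow_zero, mul_one] at h4
  calc |dentry (S.f p 𝔟) x i j|
      ≤ |dentry (S.f p 𝔟₀) x i j| + |dentry (S.f p 𝔟) x i j - dentry (S.f p 𝔟₀) x i j| := by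
        have := abs_sub_abs_le_abs_sub (dentry (S.f p 𝔟) x i j) (dentry (S.f p 𝔟₀) x i j)
        have h3 := abs_sub (dentry (S.f p 𝔟) x i j) (dentry (S.f p 𝔟₀) x i j)
        nlinarith [abs_nonneg (dentry (S.f p 𝔟) x i j - dentry (S.f p 𝔟₀) x i j),
          abs_sub_abs_le_abs_sub (dentry (S.f p 𝔟) x i j) (dentry (S.f p 𝔟₀) x i j)]
    _ ≤ C0 + C1 := add_le_add hd0 hdiff
    _ ≤ max 1 (C0 + C1) := le_max_right _ _

end Gfsk4


namespace Gfsk5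
variable {A : Type} {N d : ℕ} {r : ℕ∞}
open Gfsk Gfsk2 Gfsk3 Gfsk4

def ext (a₀ : A) (q : ℕ) (u : Fin q → A) : ℕ → A := fun n => if h : n < q then u ⟨n, h⟩ else a₀

lemma ext_agree (a₀ : A) (q : ℕ) (𝔟 : ℕ → A) :
    ∀ k < q, 𝔟 k = ext a₀ q (fun i => 𝔟 i) k := by
  intro k hk
  simp [ext, dif_pos hk]

lemma exists_pow_small {C θ ε : ℝ} (hC : 0 < C) (hθ0 : 0 < θ) (hθ1 : θ < 1) (hε : 0 < ε) :
    ∃ q : ℕ, C * θ ^ q ≤ ε := by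
  obtain ⟨q, hq⟩ := exists_pow_lt_of_lt_one (div_pos hε hC) hθ1
  refine ⟨q, ?_⟩
  have := (lt_div_iff₀' hC).mp hq
  linarith

lemma equicont1 [Fintype A] (S : SkewFamily A N d r) (hr : 2 ≤ r) (hN : 0 < N) (a₀ : A) :
    ∀ ε > (0:ℝ), ∃ δ > (0:ℝ), ∀ (𝔟 : ℕ → A),
      ∀ p₁ ∈ closure (cubeO d), ∀ p₂ ∈ closure (cubeO d),
      ∀ y ∈ cube N, ∀ z ∈ cube N, ‖p₁ - p₂‖ ≤ δ → ‖y - z‖ ≤ δ →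
      |ell hN S.f p₁ 𝔟 y - ell hN S.f p₂ 𝔟 z| ≤ ε := by
  classical
  intro ε hε
  obtain ⟨C1, hC1, θ, hθ, hold⟩ := S.holder1
  obtain ⟨q, hq⟩ := exists_pow_small hC1 hθ.1 hθ.2 (show (0:ℝ) < ε/4 by linarith)
  have key : ∀ u : Fin q → A, ∃ δ > (0:ℝ), ∀ a ∈ Kc N d, ∀ b ∈ Kc N d, dist a b ≤ δ →
      |ell hN S.f a.1 (ext a₀ q u) a.2 - ell hN S.f b.1 (ext a₀ q u) b.2| ≤ ε/2 := by
    intro u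
    have hcont : ContinuousOn (fun qq : E d × E N => ell hN S.f qq.1 (ext a₀ q u) qq.2)
        (Kc N d) :=
      ((contOn_dentry S hr (ext a₀ q u) ⟨0,hN⟩ ⟨0,hN⟩).mono (Kc_subset S)).abs
    have huc := isCompact_Kc.uniformContinuousOn_of_continuous hcont
    rw [Metric.uniformContinuousOn_iff_le] at huc
    obtain ⟨δ, hδ, hprop⟩ := huc (ε/2) (by linarith)
    refine ⟨δ, hδ, fun a ha b hb hab => ?_⟩
    have := hprop a ha b hb hab
    rwa [Real.dist_eq] at this
  choose δf hδf hfprop using key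
  have hne : Nonempty (Fin q → A) := ⟨fun _ => a₀⟩
  set δ := Finset.univ.inf' Finset.univ_nonempty δf with hδdef
  have hδpos : 0 < δ := (Finset.lt_inf'_iff _).mpr fun u _ => hδf u
  refine ⟨δ, hδpos, ?_⟩
  intro 𝔟 p₁ hp₁ p₂ hp₂ y hy z hz hpd hyz
  set u : Fin q → A := fun i => 𝔟 i with hu
  have hagree := ext_agree a₀ q 𝔟
  have hp₁P := S.P_subset hp₁
  have hp₂P := S.P_subset hp₂
  have h1 : |ell hN S.f p₁ 𝔟 y - ell hN S.f p₁ (ext a₀ q u) y| ≤ ε/4 :=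
    le_trans (le_trans (ell_sub_le hN S.f p₁ 𝔟 (ext a₀ q u) y)
      (hold p₁ hp₁P 𝔟 (ext a₀ q u) q hagree y (S.X_subset hy))) hq
  have h2 : |ell hN S.f p₂ (ext a₀ q u) z - ell hN S.f p₂ 𝔟 z| ≤ ε/4 := by
    rw [abs_sub_comm]
    exact le_trans (le_trans (ell_sub_le hN S.f p₂ 𝔟 (ext a₀ q u) z)
      (hold p₂ hp₂P 𝔟 (ext a₀ q u) q hagree z (S.X_subset hz))) hq
  have h3 : |ell hN S.f p₁ (ext a₀ q u) y - ell hN S.f p₂ (ext a₀ q u) z| ≤ ε/2 := by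
    have hd : dist (p₁, y) (p₂, z) ≤ δ := by
      simp only [Prod.dist_eq]
      exact max_le (by rwa [dist_eq_norm]) (by rwa [dist_eq_norm])
    exact hfprop u (p₁, y) (Set.mk_mem_prod hp₁ hy) (p₂, z) (Set.mk_mem_prod hp₂ hz)
      (le_trans hd (Finset.inf'_le _ (Finset.mem_univ u)))
  calc |ell hN S.f p₁ 𝔟 y - ell hN S.f p₂ 𝔟 z|
      ≤ |ell hN S.f p₁ 𝔟 y - ell hN S.f p₁ (ext a₀ q u) y|
        + |ell hN S.f p₁ (ext a₀ q u) y - ell hN S.f p₂ 𝔟 z| := abs_sub_le _ _ _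
    _ ≤ |ell hN S.f p₁ 𝔟 y - ell hN S.f p₁ (ext a₀ q u) y|
        + (|ell hN S.f p₁ (ext a₀ q u) y - ell hN S.f p₂ (ext a₀ q u) z|
          + |ell hN S.f p₂ (ext a₀ q u) z - ell hN S.f p₂ 𝔟 z|) := by
        have := abs_sub_le (ell hN S.f p₁ (ext a₀ q u) y) (ell hN S.f p₂ (ext a₀ q u) z)
          (ell hN S.f p₂ 𝔟 z)
        linarith
    _ ≤ ε/4 + (ε/2 + ε/4) := by
        refine add_le_add h1 (add_le_add h3 h2)
    _ = ε := by ring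

lemma equicont0 [Fintype A] (S : SkewFamily A N d r) (hr : 2 ≤ r) (a₀ : A) :
    ∀ ε > (0:ℝ), ∃ δ > (0:ℝ), ∀ (𝔟 : ℕ → A),
      ∀ p₁ ∈ closure (cubeO d), ∀ p₂ ∈ closure (cubeO d),
      ∀ y ∈ cube N, ‖p₁ - p₂‖ ≤ δ →
      ‖S.f p₁ 𝔟 y - S.f p₂ 𝔟 y‖ ≤ ε := by
  classical
  intro ε hε
  obtain ⟨C0, hC0, θ, hθ, hold⟩ := S.holder0
  obtain ⟨q, hq⟩ := exists_pow_small hC0 hθ.1 hθ.2 (show (0:ℝ) < ε/4 by linarith)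
  have key : ∀ u : Fin q → A, ∃ δ > (0:ℝ), ∀ a ∈ Kc N d, ∀ b ∈ Kc N d, dist a b ≤ δ →
      ‖S.f a.1 (ext a₀ q u) a.2 - S.f b.1 (ext a₀ q u) b.2‖ ≤ ε/2 := by
    intro u
    have hcont : ContinuousOn (fun qq : E d × E N => S.f qq.1 (ext a₀ q u) qq.2) (Kc N d) :=
      ((S.smooth (ext a₀ q u)).continuousOn).mono (Kc_subset S)
    have huc := isCompact_Kc.uniformContinuousOn_of_continuous hcont
    rw [Metric.uniformContinuousOn_iff_le] at huc
    obtain ⟨δ, hδ, hprop⟩ := huc (ε/2) (by linarith)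
    refine ⟨δ, hδ, fun a ha b hb hab => ?_⟩
    have := hprop a ha b hb hab
    rwa [dist_eq_norm] at this
  choose δf hδf hfprop using key
  have hne : Nonempty (Fin q → A) := ⟨fun _ => a₀⟩
  set δ := Finset.univ.inf' Finset.univ_nonempty δf with hδdef
  have hδpos : 0 < δ := (Finset.lt_inf'_iff _).mpr fun u _ => hδf u
  refine ⟨δ, hδpos, ?_⟩
  intro 𝔟 p₁ hp₁ p₂ hp₂ y hy hpd
  set u : Fin q → A := fun i => 𝔟 i with hu
  have hagree := ext_agree a₀ q 𝔟
  have h1 : ‖S.f p₁ 𝔟 y - S.f p₁ (ext a₀ q u) y‖ ≤ ε/4 :=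
    le_trans (hold p₁ (S.P_subset hp₁) 𝔟 (ext a₀ q u) q hagree y (S.X_subset hy)) hq
  have h2 : ‖S.f p₂ (ext a₀ q u) y - S.f p₂ 𝔟 y‖ ≤ ε/4 := by
    rw [norm_sub_rev]
    exact le_trans (hold p₂ (S.P_subset hp₂) 𝔟 (ext a₀ q u) q hagree y (S.X_subset hy)) hq
  have h3 : ‖S.f p₁ (ext a₀ q u) y - S.f p₂ (ext a₀ q u) y‖ ≤ ε/2 := by
    have hd : dist (p₁, y) (p₂, y) ≤ δ := by
      simp only [Prod.dist_eq]
      exact max_le (by rwa [dist_eq_norm]) (by simp [hδpos.le])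
    exact hfprop u (p₁, y) (Set.mk_mem_prod hp₁ hy) (p₂, y) (Set.mk_mem_prod hp₂ hy)
      (le_trans hd (Finset.inf'_le _ (Finset.mem_univ u)))
  calc ‖S.f p₁ 𝔟 y - S.f p₂ 𝔟 y‖
      = ‖(S.f p₁ 𝔟 y - S.f p₁ (ext a₀ q u) y) + (S.f p₁ (ext a₀ q u) y - S.f p₂ (ext a₀ q u) y)
          + (S.f p₂ (ext a₀ q u) y - S.f p₂ 𝔟 y)‖ := by congr 1; abel
    _ ≤ ‖(S.f p₁ 𝔟 y - S.f p₁ (ext a₀ q u) y) + (S.f p₁ (ext a₀ q u) y - S.f p₂ (ext a₀ q u) y)‖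
          + ‖S.f p₂ (ext a₀ q u) y - S.f p₂ 𝔟 y‖ := norm_add_le _ _
    _ ≤ ‖S.f p₁ 𝔟 y - S.f p₁ (ext a₀ q u) y‖ + ‖S.f p₁ (ext a₀ q u) y - S.f p₂ (ext a₀ q u) y‖
          + ‖S.f p₂ (ext a₀ q u) y - S.f p₂ 𝔟 y‖ := by
        have := norm_add_le (S.f p₁ 𝔟 y - S.f p₁ (ext a₀ q u) y)
          (S.f p₁ (ext a₀ q u) y - S.f p₂ (ext a₀ q u) y)
        linarith
    _ ≤ ε/4 + ε/2 + ε/4 := by refine add_le_add (add_le_add h1 h3) h2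
    _ = ε := by ring

end Gfsk5


namespace Gfsk6
variable {A : Type} {N d : ℕ} {r : ℕ∞}
open Gfsk Gfsk2 Gfsk3 Gfsk4

def Snorm (hN : 0 < N) (β : ℝ) (u : E N) : ℝ :=
  Finset.univ.sup' ⟨⟨0,hN⟩, Finset.mem_univ _⟩ (fun i : Fin N => β ^ i.val * |u i|)

variable {β : ℝ}

lemma Snorm_le_iff (hN : 0 < N) (β : ℝ) (u : E N) (c : ℝ) :
    Snorm hN β u ≤ c ↔ ∀ i : Fin N, β ^ i.val * |u i| ≤ c := by
  rw [Snorm]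
  constructor
  · intro h i; exact le_trans (Finset.le_sup' (f := fun i : Fin N => β ^ i.val * |u i|) (Finset.mem_univ i)) h
  · intro h; exact Finset.sup'_le _ _ fun i _ => h i

lemma term_le_Snorm (hN : 0 < N) (β : ℝ) (u : E N) (i : Fin N) :
    β ^ i.val * |u i| ≤ Snorm hN β u :=
  Finset.le_sup' (f := fun i : Fin N => β ^ i.val * |u i|) (Finset.mem_univ i)

lemma Snorm_nonneg (hN : 0 < N) (hβ0 : 0 < β) (u : E N) : 0 ≤ Snorm hN β u :=
  le_trans (mul_nonneg (pow_nonneg hβ0.le _) (abs_nonneg _)) (term_le_Snorm hN β u ⟨0,hN⟩)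

lemma coord_le_Snorm (hN : 0 < N) (hβ0 : 0 < β) (u : E N) (i : Fin N) :
    |u i| ≤ (β ^ i.val)⁻¹ * Snorm hN β u := by
  have h := term_le_Snorm hN β u i
  have hp : 0 < β ^ i.val := pow_pos hβ0 _
  rw [← mul_le_mul_iff_right₀ hp]
  calc β ^ i.val * |u i| ≤ Snorm hN β u := h
    _ = β ^ i.val * ((β ^ i.val)⁻¹ * Snorm hN β u) := by field_simp

lemma Snorm_le_norm (hN : 0 < N) (hβ0 : 0 < β) (hβ1 : β ≤ 1) (u : E N) :
    Snorm hN β u ≤ ‖u‖ := by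
  rw [Snorm_le_iff]
  intro i
  calc β ^ i.val * |u i| ≤ 1 * |u i| := by
        refine mul_le_mul_of_nonneg_right ?_ (abs_nonneg _)
        exact pow_le_one₀ hβ0.le hβ1
    _ = |u i| := one_mul _
    _ ≤ ‖u‖ := abs_coord_le_norm u i

lemma norm_le_Snorm (hN : 0 < N) (hβ0 : 0 < β) (hβ1 : β ≤ 1) (u : E N) :
    ‖u‖ ≤ (N : ℝ) * (β ^ N)⁻¹ * Snorm hN β u := by
  have hS := Snorm_nonneg hN hβ0 u
  have hpN : 0 < β ^ N := pow_pos hβ0 _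
  calc ‖u‖ ≤ ∑ i, |u i| := norm_le_sum_abs u
    _ ≤ ∑ _i : Fin N, (β ^ N)⁻¹ * Snorm hN β u := by
        refine Finset.sum_le_sum fun i _ => ?_
        refine le_trans (coord_le_Snorm hN hβ0 u i) ?_
        refine mul_le_mul_of_nonneg_right ?_ hS
        refine inv_anti₀ hpN ?_
        exact pow_le_pow_of_le_one hβ0.le hβ1 i.isLt.le
    _ = (N : ℝ) * ((β ^ N)⁻¹ * Snorm hN β u) := by
        rw [Finset.sum_const, Finset.card_univ, Fintype.card_fin, nsmul_eq_mul]
    _ = (N : ℝ) * (β ^ N)⁻¹ * Snorm hN β u := by ring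

lemma Snorm_sub_le (hN : 0 < N) (hβ0 : 0 < β) (a b c : E N) :
    Snorm hN β (a - c) ≤ Snorm hN β (a - b) + Snorm hN β (b - c) := by
  rw [Snorm_le_iff]
  intro i
  have h1 := term_le_Snorm hN β (a - b) i
  have h2 := term_le_Snorm hN β (b - c) i
  have he : (a - c) i = (a - b) i + (b - c) i := by
    simp [PiLp.sub_apply]
  have habs : |(a - c) i| ≤ |(a - b) i| + |(b - c) i| := by
    rw [he]; exact abs_add_le _ _
  have hmul := mul_le_mul_of_nonneg_left habs (pow_nonneg hβ0.le i.val)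
  calc β ^ i.val * |(a - c) i| ≤ β ^ i.val * (|(a - b) i| + |(b - c) i|) := hmul
    _ = β ^ i.val * |(a - b) i| + β ^ i.val * |(b - c) i| := by ring
    _ ≤ Snorm hN β (a - b) + Snorm hN β (b - c) := add_le_add h1 h2

lemma Snorm_self_zero (hN : 0 < N) (β : ℝ) (x : E N) : Snorm hN β (x - x) = 0 := by
  have h1 : ∀ i : Fin N, β ^ i.val * |(x - x) i| = 0 := by
    intro i; simp [PiLp.sub_apply]
  apply le_antisymm
  · rw [Snorm_le_iff]; intro i; rw [h1 i]
  · rw [← h1 ⟨0,hN⟩]; exact term_le_Snorm hN β (x - x) ⟨0,hN⟩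

lemma geom_weight (i : Fin N) (hβ0 : 0 < β) (hβ1 : β < 1) :
    β ^ i.val * ∑ k ∈ Finset.range i.val, (β⁻¹) ^ k ≤ β / (1 - β) := by
  have hgt : 1 < β⁻¹ := (one_lt_inv₀ hβ0).mpr hβ1
  have hbne : β⁻¹ ≠ 1 := by linarith
  rw [geom_sum_eq hbne]
  have ha0 : 0 < β ^ i.val := pow_pos hβ0 _
  have ha1 : β ^ i.val ≤ 1 := pow_le_one₀ hβ0.le hβ1.le
  have hinv : (β⁻¹) ^ i.val = (β ^ i.val)⁻¹ := by rw [inv_pow]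
  have hden : 0 < β⁻¹ - 1 := by linarith
  rw [hinv, div_eq_mul_inv, ← mul_assoc]
  have hle : β ^ i.val * ((β ^ i.val)⁻¹ - 1) = 1 - β ^ i.val := by field_simp
  rw [hle]
  have hkey : (β⁻¹ - 1)⁻¹ = β * (1 - β)⁻¹ := by
    rw [inv_eq_iff_eq_inv]
    field_simp
  have h1b : 0 < (1 - β)⁻¹ := inv_pos.mpr (by linarith)
  rw [hkey, div_eq_mul_inv, ← mul_assoc]
  exact mul_le_mul_of_nonneg_right (by nlinarith) h1b.le

end Gfsk6


namespace Gfsk7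
variable {A : Type} {N d : ℕ} {r : ℕ∞}
open Gfsk Gfsk2 Gfsk3 Gfsk4 Gfsk6

lemma sum_filter_lt (g : ℕ → ℝ) {N : ℕ} (i : Fin N) :
    ∑ j ∈ Finset.univ.filter (fun j : Fin N => j.val < i.val), g j.val
      = ∑ k ∈ Finset.range i.val, g k := by
  rw [Finset.sum_filter, Fin.sum_univ_eq_sum_range (fun k => if k < i.val then g k else 0) N]
  rw [← Finset.sum_subset (Finset.range_subset_range.mpr i.isLt.le)]
  · exact Finset.sum_congr rfl fun k hk => if_pos (Finset.mem_range.mp hk)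
  · intro k _ hk; exact if_neg (fun h => hk (Finset.mem_range.mpr h))

lemma coord_deriv_bound (S : SkewFamily A N d r) (hr : 2 ≤ r) (hN : 0 < N)
    (hU : UnipOn hN S.f S.P' S.X') {γ' γ B : ℝ} (hγ : GammaBounds hN S.f γ' γ)
    (hB0 : 0 ≤ B)
    (hB : ∀ (𝔟 : ℕ → A), ∀ p ∈ closure (cubeO d), ∀ x ∈ cube N, ∀ i j : Fin N,
      |dentry (S.f p 𝔟) x i j| ≤ B)
    (𝔟 : ℕ → A) {p : E d} (hp : p ∈ closure (cubeO d)) {v : E N} (hv : v ∈ cube N)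
    (Δ : E N) (i : Fin N) :
    |(fderiv ℝ (S.f p 𝔟) v) Δ i| ≤ γ * |Δ i|
      + B * ∑ j ∈ Finset.univ.filter (fun j : Fin N => j.val < i.val), |Δ j| := by
  have hpP := S.P_subset hp
  have hvX := S.X_subset hv
  rw [euclid_apply]
  refine le_trans (Finset.abs_sum_le_sum_abs _ _) ?_
  have habs : ∀ j : Fin N,
      |Δ j * (fderiv ℝ (S.f p 𝔟) v) (EuclideanSpace.single j (1:ℝ)) i|
        = |Δ j| * |dentry (S.f p 𝔟) v i j| := by
    intro j; rw [abs_mul]; rfl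
  rw [Finset.sum_congr rfl (fun j _ => habs j)]
  rw [← Finset.sum_filter_add_sum_filter_not Finset.univ (fun j : Fin N => j.val < i.val)
    (fun j => |Δ j| * |dentry (S.f p 𝔟) v i j|)]
  have h1 : ∑ j ∈ Finset.univ.filter (fun j : Fin N => j.val < i.val),
      |Δ j| * |dentry (S.f p 𝔟) v i j|
      ≤ B * ∑ j ∈ Finset.univ.filter (fun j : Fin N => j.val < i.val), |Δ j| := by
    rw [Finset.mul_sum]
    refine Finset.sum_le_sum fun j _ => ?_
    rw [mul_comm B]
    exact mul_le_mul_of_nonneg_left (hB 𝔟 p hp v hv i j) (abs_nonneg _)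
  have h2 : ∑ j ∈ Finset.univ.filter (fun j : Fin N => ¬ j.val < i.val),
      |Δ j| * |dentry (S.f p 𝔟) v i j| ≤ γ * |Δ i| := by
    have hmem : i ∈ Finset.univ.filter (fun j : Fin N => ¬ j.val < i.val) := by
      simp
    rw [Finset.sum_eq_single_of_mem i hmem]
    · have hdiag : dentry (S.f p 𝔟) v i i = dentry (S.f p 𝔟) v ⟨0,hN⟩ ⟨0,hN⟩ :=
        (hU p hpP 𝔟 v hvX).2.1 i ⟨0,hN⟩
      have : |dentry (S.f p 𝔟) v i i| < γ := by
        rw [hdiag]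
        exact (ell_bounds hN hγ hp 𝔟 hv).2
      rw [mul_comm]
      exact mul_le_mul_of_nonneg_right this.le (abs_nonneg _)
    · intro j hj hne
      have hgt : i.val < j.val := by
        simp only [Finset.mem_filter] at hj
        have := hj.2
        have hne' : j.val ≠ i.val := fun h => hne (Fin.ext h)
        omega
      rw [(hU p hpP 𝔟 v hvX).1 i j hgt]
      simp
  linarith

lemma coord_step (S : SkewFamily A N d r) (hr : 2 ≤ r) (hN : 0 < N)
    (hU : UnipOn hN S.f S.P' S.X') {γ' γ B : ℝ} (hγ : GammaBounds hN S.f γ' γ)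
    (hB0 : 0 ≤ B)
    (hB : ∀ (𝔟 : ℕ → A), ∀ p ∈ closure (cubeO d), ∀ x ∈ cube N, ∀ i j : Fin N,
      |dentry (S.f p 𝔟) x i j| ≤ B)
    (𝔟 : ℕ → A) {p : E d} (hp : p ∈ closure (cubeO d)) {y z : E N}
    (hy : y ∈ cube N) (hz : z ∈ cube N) (i : Fin N) :
    |S.f p 𝔟 y i - S.f p 𝔟 z i| ≤ γ * |(y - z) i|
      + B * ∑ j ∈ Finset.univ.filter (fun j : Fin N => j.val < i.val), |(y - z) j| := by
  have hpP := S.P_subset hp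
  set Δ : E N := y - z with hΔ
  set c : ℝ → E N := fun t => z + t • Δ with hc
  have hcmem : ∀ t ∈ Icc (0:ℝ) 1, c t ∈ cube N := by
    intro t ht
    have : c t = (1 - t) • z + t • y := by
      rw [hc]
      simp only [hΔ]
      rw [smul_sub, sub_smul, one_smul]
      abel
    rw [this]
    exact cube_convex N hz hy (by linarith [ht.2]) ht.1 (by ring)
  set g : ℝ → ℝ := fun t => S.f p 𝔟 (c t) i with hg
  set D : ℝ → ℝ := fun t => (fderiv ℝ (S.f p 𝔟) (c t)) Δ i with hD
  have hderiv : ∀ t ∈ Icc (0:ℝ) 1, HasDerivWithinAt g (D t) (Icc 0 1) t := by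
    intro t ht
    have hct : c t ∈ S.X' := S.X_subset (hcmem t ht)
    have hc' : HasDerivAt c Δ t := by
      have h1 : HasDerivAt (fun s : ℝ => s • Δ) ((1:ℝ) • Δ) t := (hasDerivAt_id t).smul_const Δ
      have h2 := h1.const_add z
      simpa [hc] using h2
    have hf : HasFDerivAt (S.f p 𝔟) (fderiv ℝ (S.f p 𝔟) (c t)) (c t) :=
      (diff_f S hr 𝔟 hpP hct).hasFDerivAt
    have hvec : HasDerivAt (fun s => S.f p 𝔟 (c s)) ((fderiv ℝ (S.f p 𝔟) (c t)) Δ) t :=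
      hf.comp_hasDerivAt t hc'
    have hcoord : HasDerivAt g (D t) t := by
      have := (EuclideanSpace.proj (𝕜 := ℝ) i).hasFDerivAt.comp_hasDerivAt t hvec
      exact this
    exact hcoord.hasDerivWithinAt
  have hbound : ∀ t ∈ Ico (0:ℝ) 1, ‖D t‖ ≤ γ * |Δ i|
      + B * ∑ j ∈ Finset.univ.filter (fun j : Fin N => j.val < i.val), |Δ j| := by
    intro t ht
    rw [Real.norm_eq_abs]
    exact coord_deriv_bound S hr hN hU hγ hB0 hB 𝔟 hp (hcmem t ⟨ht.1, ht.2.le⟩) Δ i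
  have := norm_image_sub_le_of_norm_deriv_le_segment' hderiv hbound 1 (by norm_num)
  have hc1 : c 1 = y := by
    rw [hc]; simp [hΔ]
  have hc0 : c 0 = z := by
    rw [hc]; simp
  have hg1 : g 1 = S.f p 𝔟 y i := by simp only [hg]; rw [hc1]
  have hg0 : g 0 = S.f p 𝔟 z i := by simp only [hg]; rw [hc0]
  rw [← hg1, ← hg0, ← Real.norm_eq_abs]
  simpa using this

lemma step_contract (S : SkewFamily A N d r) (hr : 2 ≤ r) (hN : 0 < N)
    (hU : UnipOn hN S.f S.P' S.X') {γ' γ B β γ₁ : ℝ} (hγ : GammaBounds hN S.f γ' γ)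
    (hB0 : 0 ≤ B)
    (hB : ∀ (𝔟 : ℕ → A), ∀ p ∈ closure (cubeO d), ∀ x ∈ cube N, ∀ i j : Fin N,
      |dentry (S.f p 𝔟) x i j| ≤ B)
    (hβ0 : 0 < β) (hβ1 : β < 1) (hkey : γ + B * (β / (1 - β)) ≤ γ₁)
    (𝔟 : ℕ → A) {p : E d} (hp : p ∈ closure (cubeO d)) {y z : E N}
    (hy : y ∈ cube N) (hz : z ∈ cube N) :
    Snorm hN β (S.f p 𝔟 y - S.f p 𝔟 z) ≤ γ₁ * Snorm hN β (y - z) := by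
  have hγ0 : 0 < γ := lt_trans hγ.1 hγ.2.1
  set Sd := Snorm hN β (y - z) with hSd
  have hSd0 : 0 ≤ Sd := Snorm_nonneg hN hβ0 _
  rw [Snorm_le_iff]
  intro i
  have happ : (S.f p 𝔟 y - S.f p 𝔟 z) i = S.f p 𝔟 y i - S.f p 𝔟 z i := by
    simp [PiLp.sub_apply]
  rw [happ]
  have hstep := coord_step S hr hN hU hγ hB0 hB 𝔟 hp hy hz i
  have hfilter : ∑ j ∈ Finset.univ.filter (fun j : Fin N => j.val < i.val), |(y - z) j|
      ≤ Sd * ∑ k ∈ Finset.range i.val, (β⁻¹) ^ k := by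
    rw [← sum_filter_lt (fun k => (β⁻¹)^k) i, Finset.mul_sum]
    refine Finset.sum_le_sum fun j _ => ?_
    have := coord_le_Snorm hN hβ0 (y - z) j
    rw [inv_pow]
    calc |(y - z) j| ≤ (β ^ j.val)⁻¹ * Sd := this
      _ = Sd * (β ^ j.val)⁻¹ := by ring
  have hterm : β ^ i.val * |S.f p 𝔟 y i - S.f p 𝔟 z i|
      ≤ β ^ i.val * (γ * |(y - z) i|) + B * (Sd * (β ^ i.val * ∑ k ∈ Finset.range i.val, (β⁻¹) ^ k)) := by
    have hβi : 0 ≤ β ^ i.val := pow_nonneg hβ0.le _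
    have h1 := mul_le_mul_of_nonneg_left hstep hβi
    have h2 : β ^ i.val * (B * ∑ j ∈ Finset.univ.filter (fun j : Fin N => j.val < i.val), |(y - z) j|)
        ≤ B * (Sd * (β ^ i.val * ∑ k ∈ Finset.range i.val, (β⁻¹) ^ k)) := by
      have := mul_le_mul_of_nonneg_left hfilter (mul_nonneg hβi hB0)
      calc β ^ i.val * (B * ∑ j ∈ Finset.univ.filter (fun j : Fin N => j.val < i.val), |(y - z) j|)
          = (β ^ i.val * B) * ∑ j ∈ Finset.univ.filter (fun j : Fin N => j.val < i.val), |(y - z) j| := by ring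
        _ ≤ (β ^ i.val * B) * (Sd * ∑ k ∈ Finset.range i.val, (β⁻¹) ^ k) := by
            refine mul_le_mul_of_nonneg_left hfilter (mul_nonneg hβi hB0)
        _ = B * (Sd * (β ^ i.val * ∑ k ∈ Finset.range i.val, (β⁻¹) ^ k)) := by ring
    calc β ^ i.val * |S.f p 𝔟 y i - S.f p 𝔟 z i|
        ≤ β ^ i.val * (γ * |(y - z) i| + B * ∑ j ∈ Finset.univ.filter (fun j : Fin N => j.val < i.val), |(y - z) j|) := h1
      _ = β ^ i.val * (γ * |(y - z) i|) + β ^ i.val * (B * ∑ j ∈ Finset.univ.filter (fun j : Fin N => j.val < i.val), |(y - z) j|) := by ring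
      _ ≤ β ^ i.val * (γ * |(y - z) i|) + B * (Sd * (β ^ i.val * ∑ k ∈ Finset.range i.val, (β⁻¹) ^ k)) := by linarith
  refine hterm.trans ?_
  have hA : β ^ i.val * (γ * |(y - z) i|) ≤ γ * Sd := by
    have := term_le_Snorm hN β (y - z) i
    calc β ^ i.val * (γ * |(y - z) i|) = γ * (β ^ i.val * |(y - z) i|) := by ring
      _ ≤ γ * Sd := mul_le_mul_of_nonneg_left this hγ0.le
  have hGeo : β ^ i.val * ∑ k ∈ Finset.range i.val, (β⁻¹) ^ k ≤ β / (1 - β) :=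
    geom_weight i hβ0 hβ1
  have hB2 : B * (Sd * (β ^ i.val * ∑ k ∈ Finset.range i.val, (β⁻¹) ^ k))
      ≤ B * (Sd * (β / (1 - β))) :=
    mul_le_mul_of_nonneg_left (mul_le_mul_of_nonneg_left hGeo hSd0) hB0
  have hfin : γ * Sd + B * (Sd * (β / (1 - β))) ≤ γ₁ * Sd := by
    have : γ * Sd + B * (Sd * (β / (1 - β))) = (γ + B * (β / (1 - β))) * Sd := by ring
    rw [this]
    exact mul_le_mul_of_nonneg_right hkey hSd0
  linarith

end Gfsk7


lemma ratio_aux {γ' s Eη l₁ l₂ : ℝ} (hγ'0 : 0 < γ') (hs0 : 0 < s) (hs1 : s < 1)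
    (hsE : s * Eη = 1) (hl₂ : γ' < l₂) (hup : l₁ ≤ l₂ + γ' * (1 - s) / 2) :
    l₁ ≤ Eη * l₂ := by
  have hE0 : 0 < Eη := by nlinarith
  have hE1 : 1 ≤ Eη := by nlinarith
  have h1 : (1 - s)/2 ≤ Eη - 1 := by
    nlinarith [mul_pos (sub_pos.mpr hs1) (show (0:ℝ) < 2 - s by linarith)]
  have h2 : γ' * ((1 - s)/2) ≤ γ' * (Eη - 1) := mul_le_mul_of_nonneg_left h1 hγ'0.le
  have h3 : γ' * (Eη - 1) ≤ l₂ * (Eη - 1) := mul_le_mul_of_nonneg_right hl₂.le (by linarith)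
  nlinarith

set_option maxHeartbeats 1000000 in
open Gfsk Gfsk2 Gfsk3 Gfsk4 Gfsk5 Gfsk6 Gfsk7 in
/-- Lemma (distortion w.r.t. p). -/
theorem lemma_gfsk {A : Type} [Fintype A] {N d : ℕ} {r : ℕ∞}
    (hA : 2 ≤ Fintype.card A) (hN : 0 < N) (hd : 0 < d) (hr : 2 ≤ r)
    (S : SkewFamily A N d r)
    (hU : UnipOn hN S.f S.P' S.X')
    (γ' γ : ℝ) (hγ : GammaBounds hN S.f γ' γ) :
    ∀ η > (0:ℝ), ∃ δ > (0:ℝ), ∃ D₂ > (1:ℝ),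
      ∀ p₁ ∈ closure (cubeO d), ∀ p₂ ∈ closure (cubeO d), ‖p₁ - p₂‖ ≤ δ →
      ∀ (𝔞 : ℕ → A) (w : List A),
        D₂⁻¹ * Real.exp (-η * w.length) < Lam hN S.f p₁ 𝔞 w / Lam hN S.f p₂ 𝔞 w ∧
        Lam hN S.f p₁ 𝔞 w / Lam hN S.f p₂ 𝔞 w < D₂ * Real.exp (η * w.length) := by
  intro η hη
  have hγ'0 : 0 < γ' := hγ.1
  have hγ'γ : γ' < γ := hγ.2.1
  have hγ1 : γ < 1 := hγ.2.2.1
  have hγ0 : 0 < γ := lt_trans hγ'0 hγ'γ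
  have hA0 : Nonempty A := Fintype.card_pos_iff.mp (by omega)
  obtain ⟨a₀⟩ := hA0
  obtain ⟨B, hB1, hB⟩ := exists_B S hr a₀
  have hB0 : (0:ℝ) ≤ B := le_trans zero_le_one hB1
  set β : ℝ := (1 - γ) / (1 - γ + 2*B) with hβdef
  have hdenom : 0 < 1 - γ + 2*B := by nlinarith
  have hβ0 : 0 < β := div_pos (by linarith) hdenom
  have hβ1 : β < 1 := by rw [hβdef, div_lt_one hdenom]; nlinarith
  set γ₁ : ℝ := (1 + γ)/2 with hγ₁def
  have hγ₁1 : γ₁ < 1 := by rw [hγ₁def]; linarith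
  have hγ₁0 : 0 < γ₁ := by rw [hγ₁def]; linarith
  have h1γ₁ : 0 < 1 - γ₁ := by linarith
  have hkey : γ + B * (β / (1 - β)) ≤ γ₁ := by
    have hBpos : (0:ℝ) < B := lt_of_lt_of_le zero_lt_one hB1
    have hdne : (1 - γ + 2*B) ≠ 0 := ne_of_gt hdenom
    have h1mβ : 1 - β = (2*B) / (1 - γ + 2*B) := by
      rw [hβdef]
      field_simp
      ring
    have hβalt : β / (1 - β) = (1 - γ) / (2*B) := by
      rw [hβdef, h1mβ]
      rw [div_div_div_cancel_right₀]
      exact ne_of_gt (by linarith)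
    have hfin : B * (β / (1 - β)) = (1 - γ)/2 := by
      rw [hβalt]
      field_simp
    rw [hfin, hγ₁def]
    linarith
  -- epsilon for the single-step ratio
  have hs1 : Real.exp (-η) < 1 := by
    rw [Real.exp_lt_one_iff]; linarith
  have hs0 : 0 < Real.exp (-η) := Real.exp_pos _
  set εl : ℝ := γ' * (1 - Real.exp (-η)) / 2 with hεldef
  have hεl : 0 < εl := by
    rw [hεldef]
    have : 0 < 1 - Real.exp (-η) := by linarith
    positivity
  obtain ⟨δ₁, hδ₁, hEq1⟩ := equicont1 S hr hN a₀ εl hεl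
  set cN : ℝ := (N : ℝ) * (β^N)⁻¹ with hcNdef
  have hcN : 0 < cN := by
    rw [hcNdef]
    have h1 : (0:ℝ) < N := Nat.cast_pos.mpr hN
    have h2 : 0 < (β^N)⁻¹ := inv_pos.mpr (pow_pos hβ0 N)
    positivity
  set εf : ℝ := (1 - γ₁) * δ₁ / cN with hεfdef
  have hεf : 0 < εf := by rw [hεfdef]; positivity
  obtain ⟨δ₂, hδ₂, hEq0⟩ := equicont0 S hr a₀ εf hεf
  refine ⟨min δ₁ δ₂, lt_min hδ₁ hδ₂, 2, one_lt_two, ?_⟩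
  intro p₁ hp₁ p₂ hp₂ hdist 𝔞 w
  have hdist₁ : ‖p₁ - p₂‖ ≤ δ₁ := le_trans hdist (min_le_left _ _)
  have hdist₂ : ‖p₁ - p₂‖ ≤ δ₂ := le_trans hdist (min_le_right _ _)
  have hp₁P : p₁ ∈ S.P' := S.P_subset hp₁
  have hp₂P : p₂ ∈ S.P' := S.P_subset hp₂
  -- main induction
  have main : ∀ (w : List A) (𝔞 : ℕ → A), ∀ x ∈ cube N,
      Snorm hN β (psi S.f p₁ w 𝔞 x - psi S.f p₂ w 𝔞 x) ≤ εf/(1-γ₁) ∧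
      lam hN S.f p₁ 𝔞 w x ≤ Real.exp (η * w.length) * lam hN S.f p₂ 𝔞 w x ∧
      lam hN S.f p₂ 𝔞 w x ≤ Real.exp (η * w.length) * lam hN S.f p₁ 𝔞 w x := by
    intro w
    induction w with
    | nil =>
        intro 𝔞 x hx
        refine ⟨?_, ?_, ?_⟩
        · have : psi S.f p₁ [] 𝔞 x - psi S.f p₂ [] 𝔞 x = x - x := rfl
          rw [this, Snorm_self_zero]
          positivity
        · rw [lam_nil, lam_nil]; simp
        · rw [lam_nil, lam_nil]; simp
    | cons a w ih =>
        intro 𝔞 x hx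
        set 𝔟 := consF a 𝔞 with h𝔟
        obtain ⟨ihS, ih₁₂, ih₂₁⟩ := ih 𝔟 x hx
        set y := psi S.f p₁ w 𝔟 x with hy
        set z := psi S.f p₂ w 𝔟 x with hz
        have hyc : y ∈ cube N := psi_mem_cube S hp₁P w 𝔟 hx
        have hzc : z ∈ cube N := psi_mem_cube S hp₂P w 𝔟 hx
        -- Snorm bound
        have hSnew : Snorm hN β (psi S.f p₁ (a :: w) 𝔞 x - psi S.f p₂ (a :: w) 𝔞 x)
            ≤ εf/(1-γ₁) := by
          have heq : psi S.f p₁ (a :: w) 𝔞 x - psi S.f p₂ (a :: w) 𝔞 x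
              = S.f p₁ 𝔟 y - S.f p₂ 𝔟 z := rfl
          rw [heq]
          have htri := Snorm_sub_le hN hβ0 (S.f p₁ 𝔟 y) (S.f p₂ 𝔟 y) (S.f p₂ 𝔟 z)
          have h1 : Snorm hN β (S.f p₁ 𝔟 y - S.f p₂ 𝔟 y) ≤ εf :=
            le_trans (Snorm_le_norm hN hβ0 hβ1.le _)
              (hEq0 𝔟 p₁ hp₁ p₂ hp₂ y hyc hdist₂)
          have h2 : Snorm hN β (S.f p₂ 𝔟 y - S.f p₂ 𝔟 z) ≤ γ₁ * (εf/(1-γ₁)) := by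
            refine le_trans (step_contract S hr hN hU hγ hB0 hB hβ0 hβ1 hkey 𝔟 hp₂ hyc hzc) ?_
            exact mul_le_mul_of_nonneg_left ihS hγ₁0.le
          have halg : εf + γ₁ * (εf/(1-γ₁)) = εf/(1-γ₁) := by
            field_simp
            ring
          linarith
        refine ⟨hSnew, ?_, ?_⟩
        -- distance between orbit points
        · have hyz : ‖y - z‖ ≤ δ₁ := by
            calc ‖y - z‖ ≤ cN * Snorm hN β (y - z) := by
                  have := norm_le_Snorm hN hβ0 hβ1.le (y - z)
                  rw [hcNdef]; linarith
              _ ≤ cN * (εf/(1-γ₁)) := mul_le_mul_of_nonneg_left ihS hcN.le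
              _ = δ₁ := by rw [hεfdef]; field_simp
          have hed : |ell hN S.f p₁ 𝔟 y - ell hN S.f p₂ 𝔟 z| ≤ εl :=
            hEq1 𝔟 p₁ hp₁ p₂ hp₂ y hyc z hzc hdist₁ hyz
          have he₁ := ell_bounds hN hγ hp₁ 𝔟 hyc
          have he₂ := ell_bounds hN hγ hp₂ 𝔟 hzc
          have hEe : Real.exp (-η) * Real.exp η = 1 := by
            rw [← Real.exp_add]; norm_num
          have hratio : ell hN S.f p₁ 𝔟 y ≤ Real.exp η * ell hN S.f p₂ 𝔟 z := by
            have hup : ell hN S.f p₁ 𝔟 y ≤ ell hN S.f p₂ 𝔟 z + γ' * (1 - Real.exp (-η)) / 2 := by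
              have habs := abs_le.mp hed
              rw [hεldef] at habs
              linarith [habs.2]
            exact ratio_aux hγ'0 hs0 hs1 hEe he₂.1 hup
          rw [lam_cons S hr hN hU hp₁P a w 𝔞 (S.X_subset hx),
            lam_cons S hr hN hU hp₂P a w 𝔞 (S.X_subset hx)]
          have hexp : Real.exp (η * ((a :: w).length : ℝ))
              = Real.exp η * Real.exp (η * (w.length : ℝ)) := by
            rw [← Real.exp_add]
            congr 1
            push_cast [List.length_cons]
            ring
          rw [hexp]
          have hlam₁nn : (0:ℝ) ≤ lam hN S.f p₁ 𝔟 w x := abs_nonneg _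
          have hell₂nn : (0:ℝ) ≤ ell hN S.f p₂ 𝔟 z := abs_nonneg _
          calc ell hN S.f p₁ 𝔟 y * lam hN S.f p₁ 𝔟 w x
              ≤ (Real.exp η * ell hN S.f p₂ 𝔟 z) * (Real.exp (η * (w.length:ℝ)) * lam hN S.f p₂ 𝔟 w x) := by
                exact mul_le_mul hratio ih₁₂ hlam₁nn
                  (mul_nonneg (Real.exp_pos η).le (ell_nonneg hN S.f p₂ 𝔟 z))
            _ = Real.exp η * Real.exp (η * (w.length:ℝ)) * (ell hN S.f p₂ 𝔟 z * lam hN S.f p₂ 𝔟 w x) := by ring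
        · have hyz : ‖y - z‖ ≤ δ₁ := by
            calc ‖y - z‖ ≤ cN * Snorm hN β (y - z) := by
                  have := norm_le_Snorm hN hβ0 hβ1.le (y - z)
                  rw [hcNdef]; linarith
              _ ≤ cN * (εf/(1-γ₁)) := mul_le_mul_of_nonneg_left ihS hcN.le
              _ = δ₁ := by rw [hεfdef]; field_simp
          have hed : |ell hN S.f p₁ 𝔟 y - ell hN S.f p₂ 𝔟 z| ≤ εl :=
            hEq1 𝔟 p₁ hp₁ p₂ hp₂ y hyc z hzc hdist₁ hyz
          have he₁ := ell_bounds hN hγ hp₁ 𝔟 hyc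
          have he₂ := ell_bounds hN hγ hp₂ 𝔟 hzc
          have hEe : Real.exp (-η) * Real.exp η = 1 := by
            rw [← Real.exp_add]; norm_num
          have hratio : ell hN S.f p₂ 𝔟 z ≤ Real.exp η * ell hN S.f p₁ 𝔟 y := by
            have hup : ell hN S.f p₂ 𝔟 z ≤ ell hN S.f p₁ 𝔟 y + γ' * (1 - Real.exp (-η)) / 2 := by
              have habs := abs_le.mp hed
              rw [hεldef] at habs
              linarith [habs.1]
            exact ratio_aux hγ'0 hs0 hs1 hEe he₁.1 hup
          rw [lam_cons S hr hN hU hp₁P a w 𝔞 (S.X_subset hx),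
            lam_cons S hr hN hU hp₂P a w 𝔞 (S.X_subset hx)]
          have hexp : Real.exp (η * ((a :: w).length : ℝ))
              = Real.exp η * Real.exp (η * (w.length : ℝ)) := by
            rw [← Real.exp_add]
            congr 1
            push_cast [List.length_cons]
            ring
          rw [hexp]
          have hlam₂nn : (0:ℝ) ≤ lam hN S.f p₂ 𝔟 w x := abs_nonneg _
          calc ell hN S.f p₂ 𝔟 z * lam hN S.f p₂ 𝔟 w x
              ≤ (Real.exp η * ell hN S.f p₁ 𝔟 y) * (Real.exp (η * (w.length:ℝ)) * lam hN S.f p₁ 𝔟 w x) := by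
                exact mul_le_mul hratio ih₂₁ hlam₂nn
                  (mul_nonneg (Real.exp_pos η).le (ell_nonneg hN S.f p₁ 𝔟 y))
            _ = Real.exp η * Real.exp (η * (w.length:ℝ)) * (ell hN S.f p₁ 𝔟 y * lam hN S.f p₁ 𝔟 w x) := by ring
  -- conclusion via sSup
  set n := w.length with hn
  set Ex := Real.exp (η * (n:ℝ)) with hEx
  have hExpos : 0 < Ex := Real.exp_pos _
  have hbdd₁ : BddAbove ((fun x => lam hN S.f p₁ 𝔞 w x) '' cube N) := by
    refine ⟨γ^n, ?_⟩
    rintro v ⟨x, hx, rfl⟩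
    exact (lam_bounds S hr hN hU hγ hp₁ w 𝔞 hx).2
  have hbdd₂ : BddAbove ((fun x => lam hN S.f p₂ 𝔞 w x) '' cube N) := by
    refine ⟨γ^n, ?_⟩
    rintro v ⟨x, hx, rfl⟩
    exact (lam_bounds S hr hN hU hγ hp₂ w 𝔞 hx).2
  have hne₁ : ((fun x => lam hN S.f p₁ 𝔞 w x) '' cube N).Nonempty :=
    ⟨_, mem_image_of_mem _ (zero_mem_cube N)⟩
  have hne₂ : ((fun x => lam hN S.f p₂ 𝔞 w x) '' cube N).Nonempty :=
    ⟨_, mem_image_of_mem _ (zero_mem_cube N)⟩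
  have hL₁ge : γ'^n ≤ Lam hN S.f p₁ 𝔞 w :=
    le_trans (lam_bounds S hr hN hU hγ hp₁ w 𝔞 (zero_mem_cube N)).1
      (le_csSup hbdd₁ (mem_image_of_mem _ (zero_mem_cube N)))
  have hL₂ge : γ'^n ≤ Lam hN S.f p₂ 𝔞 w :=
    le_trans (lam_bounds S hr hN hU hγ hp₂ w 𝔞 (zero_mem_cube N)).1
      (le_csSup hbdd₂ (mem_image_of_mem _ (zero_mem_cube N)))
  have hL₁pos : 0 < Lam hN S.f p₁ 𝔞 w := lt_of_lt_of_le (pow_pos hγ'0 n) hL₁ge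
  have hL₂pos : 0 < Lam hN S.f p₂ 𝔞 w := lt_of_lt_of_le (pow_pos hγ'0 n) hL₂ge
  have h12 : Lam hN S.f p₁ 𝔞 w ≤ Ex * Lam hN S.f p₂ 𝔞 w := by
    refine csSup_le hne₁ ?_
    rintro v ⟨x, hx, rfl⟩
    have h1 := (main w 𝔞 x hx).2.1
    have h2 : lam hN S.f p₂ 𝔞 w x ≤ Lam hN S.f p₂ 𝔞 w :=
      le_csSup hbdd₂ (mem_image_of_mem _ hx)
    calc lam hN S.f p₁ 𝔞 w x ≤ Ex * lam hN S.f p₂ 𝔞 w x := h1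
      _ ≤ Ex * Lam hN S.f p₂ 𝔞 w := mul_le_mul_of_nonneg_left h2 hExpos.le
  have h21 : Lam hN S.f p₂ 𝔞 w ≤ Ex * Lam hN S.f p₁ 𝔞 w := by
    refine csSup_le hne₂ ?_
    rintro v ⟨x, hx, rfl⟩
    have h1 := (main w 𝔞 x hx).2.2
    have h2 : lam hN S.f p₁ 𝔞 w x ≤ Lam hN S.f p₁ 𝔞 w :=
      le_csSup hbdd₁ (mem_image_of_mem _ hx)
    calc lam hN S.f p₂ 𝔞 w x ≤ Ex * lam hN S.f p₁ 𝔞 w x := h1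
      _ ≤ Ex * Lam hN S.f p₁ 𝔞 w := mul_le_mul_of_nonneg_left h2 hExpos.le
  have hEe : Real.exp (-η * (n:ℝ)) * Ex = 1 := by
    rw [hEx, ← Real.exp_add]
    rw [show -η * (n:ℝ) + η * (n:ℝ) = 0 by ring, Real.exp_zero]
  have hepos : 0 < Real.exp (-η * (n:ℝ)) := Real.exp_pos _
  constructor
  · have hlow : Real.exp (-η * (n:ℝ)) ≤ Lam hN S.f p₁ 𝔞 w / Lam hN S.f p₂ 𝔞 w := by
      rw [le_div_iff₀ hL₂pos]
      nlinarith
    have : (2:ℝ)⁻¹ * Real.exp (-η * (n:ℝ)) < Real.exp (-η * (n:ℝ)) := by nlinarith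
    linarith
  · have hupp : Lam hN S.f p₁ 𝔞 w / Lam hN S.f p₂ 𝔞 w ≤ Ex := by
      rw [div_le_iff₀ hL₂pos]
      nlinarith
    have : Ex < 2 * Ex := by nlinarith
    linarith

end Paper
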